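/- arXiv:2012.05213 — 3 statements merged into one kernel-verified Lean document; each statement's English description precedes it below -/
import Mathlib

section
/- Let X = {x_1,...,x_n} be a multiset of positive integers with total sum T. Construct projects {x_i^1, x_i^2 : i ∈ [n]} with c(x_i^1) = c(x_i^2) = x_i, groups {x_i^1, x_i^2} with budget x_i for each i, group {x_i^1 : i} with budget T/2, group {x_i^2 : i} with budget T/2, global budget B = T, one voter approving all projects, and required utility u = n. Then this Group-PB instance has a feasible bundle of utility at least n if and only if X can be partitioned into two parts each of sum T/2. -/
/-- The Group-PB instance built from a Partition instance (two projects of cost `x i`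
per number, pair-groups with budget `x i`, two side groups with budget `T/2`, global
budget `T`, one voter approving everything) has a feasible bundle of utility at least
`n` iff the numbers can be partitioned into two parts of equal sum `T/2`. -/
theorem stmt_9 (n : ℕ) (x : Fin n → ℕ) (hx : ∀ i, 0 < x i) (T : ℕ)
    (hT : T = ∑ i, x i) :
    (∃ Sb : Finset (Fin n × Bool),
      (∑ p ∈ Sb, x p.1 ≤ T) ∧
      (∀ i : Fin n, ∑ p ∈ Sb.filter (fun p => p.1 = i), x p.1 ≤ x i) ∧
      (∀ bbit : Bool, 2 * ∑ p ∈ Sb.filter (fun p => p.2 = bbit), x p.1 ≤ T) ∧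
      n ≤ Sb.card) ↔
    ∃ A : Finset (Fin n), 2 * ∑ i ∈ A, x i = T := by
  constructor
  · rintro ⟨Sb, -, hpair, hside, hcard⟩
    -- each fiber over i has at most one element
    have hfib : ∀ i : Fin n, (Sb.filter fun p => p.1 = i) ⊆ {(i, true), (i, false)} := by
      intro i p hp
      simp only [Finset.mem_filter] at hp
      obtain ⟨-, h1⟩ := hp
      rcases p with ⟨j, b⟩
      cases b <;> simp_all
    have hfibcard : ∀ i, (Sb.filter fun p => p.1 = i).card ≤ 1 := by
      intro i
      by_contra h
      push_neg at h
      have hpairc : ({(i, true), (i, false)} : Finset (Fin n × Bool)).card = 2 :=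
        Finset.card_pair (by simp)
      have h2 : (Sb.filter fun p => p.1 = i) = {(i, true), (i, false)} :=
        Finset.eq_of_subset_of_card_le (hfib i) (by omega)
      have hp := hpair i
      rw [h2, Finset.sum_pair (by simp : ((i, true) : Fin n × Bool) ≠ (i, false))] at hp
      have := hx i
      simp at hp
      omega
    have hsum : Sb.card = ∑ i, (Sb.filter fun p => p.1 = i).card :=
      Finset.card_eq_sum_card_fiberwise (fun p _ => Finset.mem_univ _)
    have hall : ∀ i, (Sb.filter fun p => p.1 = i).card = 1 := by
      by_contra h
      push_neg at h
      obtain ⟨j, hj⟩ := h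
      have hlt : ∑ i, (Sb.filter fun p => p.1 = i).card < ∑ _i : Fin n, 1 :=
        Finset.sum_lt_sum (fun i _ => hfibcard i)
          ⟨j, Finset.mem_univ j, by have := hfibcard j; omega⟩
      simp only [Finset.sum_const, Finset.card_univ, Fintype.card_fin, smul_eq_mul,
        mul_one] at hlt
      omega
    -- exactly one of (j,true),(j,false) in Sb
    have hone : ∀ j : Fin n, ((j, true) ∈ Sb ↔ (j, false) ∉ Sb) := by
      intro j
      obtain ⟨p, hp⟩ := Finset.card_eq_one.mp (hall j)
      have hmem : ∀ q : Fin n × Bool, (q ∈ Sb ∧ q.1 = j) ↔ q = p := by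
        intro q
        constructor
        · intro hq
          have : q ∈ Sb.filter fun r => r.1 = j := Finset.mem_filter.mpr hq
          rw [hp] at this
          exact Finset.mem_singleton.mp this
        · rintro rfl
          have : q ∈ Sb.filter fun r => r.1 = j := hp ▸ Finset.mem_singleton_self q
          exact Finset.mem_filter.mp this
      have hpj : p.1 = j := by
        have : p ∈ Sb.filter fun r => r.1 = j := hp ▸ Finset.mem_singleton_self p
        exact (Finset.mem_filter.mp this).2
      have ht := hmem (j, true)
      have hf := hmem (j, false)
      rcases p with ⟨j', b⟩
      simp only at hpj
      subst hpj
      cases b <;> simp_all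
    set A : Finset (Fin n) := Finset.univ.filter (fun i => (i, true) ∈ Sb) with hA
    have hAmem : ∀ i, i ∈ A ↔ (i, true) ∈ Sb := by
      intro i; simp [hA]
    have htrue : Sb.filter (fun p => p.2 = true) = A.image (fun i => (i, true)) := by
      ext p
      obtain ⟨j, b⟩ := p
      simp only [Finset.mem_filter, Finset.mem_image]
      constructor
      · rintro ⟨hmem, rfl⟩
        exact ⟨j, (hAmem j).mpr hmem, rfl⟩
      · rintro ⟨i, hi, h⟩
        cases h
        exact ⟨(hAmem j).mp hi, rfl⟩
    have hfalse : Sb.filter (fun p => p.2 = false) =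
        (Finset.univ.filter (fun i => i ∉ A)).image (fun i => (i, false)) := by
      ext p
      obtain ⟨j, b⟩ := p
      simp only [Finset.mem_filter, Finset.mem_image, Finset.mem_univ, true_and]
      constructor
      · rintro ⟨hmem, rfl⟩
        refine ⟨j, ?_, rfl⟩
        rw [hAmem]
        intro ht
        exact (hone j).mp ht hmem
      · rintro ⟨i, hi, h⟩
        cases h
        rw [hAmem] at hi
        refine ⟨?_, rfl⟩
        by_contra h'
        exact hi ((hone j).mpr h')
    have hst := hside true
    have hsf := hside false
    rw [htrue, Finset.sum_image (by intro a _ b _ h; simpa using h)] at hst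
    rw [hfalse, Finset.sum_image (by intro a _ b _ h; simpa using h)] at hsf
    dsimp only at hst hsf
    have hsplit : ∑ i ∈ A, x i + ∑ i ∈ Finset.univ.filter (fun i => i ∉ A), x i = T := by
      rw [hT, hA]
      have := Finset.sum_filter_add_sum_filter_not Finset.univ
        (fun i => (i, true) ∈ Sb) x
      simpa using this
    exact ⟨A, by omega⟩
  · rintro ⟨A, hA⟩
    have hinj : Function.Injective (fun i : Fin n => (i, decide (i ∈ A))) := by
      intro a b h
      simpa using congrArg Prod.fst h
    refine ⟨Finset.univ.image (fun i => (i, decide (i ∈ A))), ?_, ?_, ?_, ?_⟩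
    · rw [Finset.sum_image (fun a _ b _ h => hinj h)]
      exact le_of_eq hT.symm
    · intro i
      rw [Finset.sum_filter, Finset.sum_image (fun a _ b _ h => hinj h)]
      simp
    · intro bbit
      rw [Finset.sum_filter, Finset.sum_image (fun a _ b _ h => hinj h)]
      dsimp only
      have hsplit : ∑ i ∈ A, x i + ∑ i ∈ Finset.univ.filter (fun i => i ∉ A), x i = T := by
        rw [hT]
        simpa using Finset.sum_filter_add_sum_filter_not Finset.univ (fun i => i ∈ A) x
      cases bbit
      · have heq : (∑ j : Fin n, if decide (j ∈ A) = false then x j else 0) =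
            ∑ i ∈ Finset.univ.filter (fun i => i ∉ A), x i := by
          rw [Finset.sum_filter]
          apply Finset.sum_congr rfl
          intro j _
          by_cases h : j ∈ A <;> simp [h]
        rw [heq]; omega
      · have heq : (∑ j : Fin n, if decide (j ∈ A) = true then x j else 0) =
            ∑ i ∈ A, x i := by
          rw [← Finset.sum_filter]
          apply Finset.sum_congr ?_ (fun _ _ => rfl)
          ext j; simp
        rw [heq]; omega
    · rw [Finset.card_image_of_injective _ hinj]
      simp
end

section
/- Partition projects by type: for R ⊆ F, a project has type R if it belongs to exactly the groups in R. Suppose for each type R and each target utility value z, X_R(z) is a minimum-cost subset of projects of type R achieving utility at least z. Let X* be any feasible bundle and u*(R) its utility from projects of type R. Then the union over R of X_R(min(u*(R), u)) is a feasible bundle with utility at least min(u, Σ_R u*(R)), where feasibility uses the fact that the cost of any group F equals the sum over types R containing F of the cost of type-R projects. -/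
/-- Replacing the type-`R` part of a feasible bundle `X*` by a min-cost type-`R`
bundle of utility at least `min (u*(R)) u`, for every type `R`, yields a feasible
bundle of utility at least `min u (∑ R, u*(R))`. -/
theorem stmt_12 {ι : Type*} [Fintype ι] [DecidableEq ι]
    (c a : ι → ℕ) (g : ℕ) (F : Fin g → Finset ι) (b : Fin g → ℕ) (B u : ℕ)
    (typeOf : ι → Finset (Fin g))
    (htype : ∀ p, typeOf p = Finset.univ.filter (fun i => p ∈ F i))
    (Xstar : Finset ι)
    (hXB : ∑ p ∈ Xstar, c p ≤ B)
    (hXF : ∀ i : Fin g, ∑ p ∈ Xstar.filter (· ∈ F i), c p ≤ b i)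
    (ustar : Finset (Fin g) → ℕ)
    (hustar : ∀ R, ustar R = ∑ p ∈ Xstar.filter (fun p => typeOf p = R), a p)
    (Y : Finset (Fin g) → Finset ι)
    (hYtype : ∀ R, ∀ p ∈ Y R, typeOf p = R)
    (hYutil : ∀ R, min (ustar R) u ≤ ∑ p ∈ Y R, a p)
    (hYmin : ∀ R, ∀ W : Finset ι, (∀ p ∈ W, typeOf p = R) →
      min (ustar R) u ≤ ∑ p ∈ W, a p → ∑ p ∈ Y R, c p ≤ ∑ p ∈ W, c p) :
    (∑ p ∈ Finset.univ.biUnion Y, c p ≤ B) ∧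
    (∀ i : Fin g, ∑ p ∈ (Finset.univ.biUnion Y).filter (· ∈ F i), c p ≤ b i) ∧
    min u (∑ R : Finset (Fin g), ustar R) ≤ ∑ p ∈ Finset.univ.biUnion Y, a p := by
  classical
  -- membership in F i is determined by typeOf
  have hmemF : ∀ p (i : Fin g), p ∈ F i ↔ i ∈ typeOf p := by
    intro p i
    rw [htype p]
    simp
  -- the Y R are pairwise disjoint
  have hdisj : ∀ R ∈ (Finset.univ : Finset (Finset (Fin g))),
      ∀ S ∈ (Finset.univ : Finset (Finset (Fin g))), R ≠ S → Disjoint (Y R) (Y S) := by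
    intro R _ S _ hRS
    rw [Finset.disjoint_left]
    intro p hpR hpS
    exact hRS ((hYtype R p hpR).symm.trans (hYtype S p hpS))
  have hsum : ∀ f : ι → ℕ, ∑ p ∈ Finset.univ.biUnion Y, f p = ∑ R, ∑ p ∈ Y R, f p := by
    intro f
    exact Finset.sum_biUnion hdisj
  -- splitting a set by fibers of typeOf
  have hsplit : ∀ (s : Finset ι) (f : ι → ℕ),
      ∑ p ∈ s, f p = ∑ R, ∑ p ∈ s.filter (fun p => typeOf p = R), f p := by
    intro s f
    exact (Finset.sum_fiberwise s typeOf f).symm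
  -- cost comparison per type
  have hcost : ∀ R, ∑ p ∈ Y R, c p ≤ ∑ p ∈ Xstar.filter (fun p => typeOf p = R), c p := by
    intro R
    refine hYmin R _ (fun p hp => (Finset.mem_filter.mp hp).2) ?_
    rw [← hustar]
    exact min_le_left _ _
  refine ⟨?_, ?_, ?_⟩
  · calc ∑ p ∈ Finset.univ.biUnion Y, c p = ∑ R, ∑ p ∈ Y R, c p := hsum c
      _ ≤ ∑ R, ∑ p ∈ Xstar.filter (fun p => typeOf p = R), c p :=
          Finset.sum_le_sum fun R _ => hcost R
      _ = ∑ p ∈ Xstar, c p := (hsplit Xstar c).symm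
      _ ≤ B := hXB
  · intro i
    have hYfi : ∀ R, (Y R).filter (· ∈ F i) = if i ∈ R then Y R else ∅ := by
      intro R
      split_ifs with h
      · apply Finset.filter_true_of_mem
        intro p hp
        rw [hmemF p i, hYtype R p hp]
        exact h
      · apply Finset.filter_false_of_mem
        intro p hp
        rw [hmemF p i, hYtype R p hp]
        exact h
    have hXfi : ∀ R, (Xstar.filter (· ∈ F i)).filter (fun p => typeOf p = R)
        = if i ∈ R then Xstar.filter (fun p => typeOf p = R) else ∅ := by
      intro R
      split_ifs with h
      · ext p
        simp only [Finset.mem_filter]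
        constructor
        · rintro ⟨⟨hp, _⟩, ht⟩; exact ⟨hp, ht⟩
        · rintro ⟨hp, ht⟩
          refine ⟨⟨hp, ?_⟩, ht⟩
          rw [hmemF p i, ht]; exact h
      · apply Finset.filter_false_of_mem
        intro p hp
        intro ht
        exact h (ht ▸ (hmemF p i).mp (Finset.mem_filter.mp hp).2)
    have hfilt : (Finset.univ.biUnion Y).filter (· ∈ F i)
        = Finset.univ.biUnion (fun R => (Y R).filter (· ∈ F i)) := by
      exact Finset.filter_biUnion _ _ _
    have hdisj2 : ∀ R ∈ (Finset.univ : Finset (Finset (Fin g))),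
        ∀ S ∈ (Finset.univ : Finset (Finset (Fin g))), R ≠ S →
        Disjoint ((Y R).filter (· ∈ F i)) ((Y S).filter (· ∈ F i)) := by
      intro R hR S hS hRS
      exact Finset.disjoint_filter_filter (hdisj R hR S hS hRS)
    calc ∑ p ∈ (Finset.univ.biUnion Y).filter (· ∈ F i), c p
        = ∑ R, ∑ p ∈ (Y R).filter (· ∈ F i), c p := by
          rw [hfilt]; exact Finset.sum_biUnion hdisj2
      _ ≤ ∑ R, ∑ p ∈ (Xstar.filter (· ∈ F i)).filter (fun p => typeOf p = R), c p := by
          refine Finset.sum_le_sum fun R _ => ?_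
          rw [hYfi R, hXfi R]
          split_ifs with h
          · exact hcost R
          · simp
      _ = ∑ p ∈ Xstar.filter (· ∈ F i), c p := (hsplit _ c).symm
      _ ≤ b i := hXF i
  · have hstep : ∑ R, min (ustar R) u ≤ ∑ p ∈ Finset.univ.biUnion Y, a p := by
      rw [hsum a]
      exact Finset.sum_le_sum fun R _ => hYutil R
    refine le_trans ?_ hstep
    by_cases h : ∃ R : Finset (Fin g), u ≤ ustar R
    · obtain ⟨R, hR⟩ := h
      calc min u (∑ R : Finset (Fin g), ustar R) ≤ u := min_le_left _ _
        _ = min (ustar R) u := (min_eq_right hR).symm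
        _ ≤ ∑ R, min (ustar R) u :=
            Finset.single_le_sum (f := fun S => min (ustar S) u) (fun _ _ => Nat.zero_le _) (Finset.mem_univ R)
    · push_neg at h
      have : ∑ R, min (ustar R) u = ∑ R : Finset (Fin g), ustar R :=
        Finset.sum_congr rfl fun R _ => min_eq_left (le_of_lt (h R))
      rw [this]
      exact min_le_right _ _
end

section
/- Suppose each project p has cost c(p) and approval utility a(p) with a(p) ≤ n, and projects are grouped into t types. If for each type R and each z ∈ {0,...,u} one computes the minimum cost m_R(z) of a subset of type-R projects with utility exactly at least z, then max over all choices (z_R)_{R} with Σ_R z_R ≥ u of feasibility of the combined min-cost bundles decides the Group-PB instance, and there are at most (u+1)^t such choices; in particular the XP algorithm wrt. g runs over at most (u+1)^{2^g} cases since t ≤ 2^g. -/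
section aux

variable {ι : Type*} [DecidableEq ι] {g : ℕ}

lemma aux_sum_biUnion (typeOf : ι → Finset (Fin g)) (Y : Finset (Fin g) → Finset ι)
    (hY : ∀ R, ∀ p ∈ Y R, typeOf p = R) (f : ι → ℕ) :
    ∑ p ∈ Finset.univ.biUnion Y, f p = ∑ R : Finset (Fin g), ∑ p ∈ Y R, f p := by
  refine Finset.sum_biUnion ?_
  intro R hR R' hR' hne
  refine Finset.disjoint_left.mpr fun p hp hp' => hne ?_
  rw [← hY R p hp, hY R' p hp']

end aux

/-- The XP algorithm wrt. `g`: the Group-PB instance is a yes-instance iff some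
choice of per-type target utilities `z : Finset (Fin g) → Fin (u+1)` admits
min-cost per-type bundles whose combination is feasible and whose targets sum to
at least `u`; moreover the number of such choices is `(u+1)^(2^g)`, since the
number of project types is at most `2^g`. -/
theorem stmt_19 {ι : Type*} [Fintype ι] [DecidableEq ι]
    (c a : ι → ℕ) (g : ℕ) (F : Fin g → Finset ι) (b : Fin g → ℕ) (B u : ℕ)
    (typeOf : ι → Finset (Fin g))
    (htype : ∀ p, typeOf p = Finset.univ.filter (fun i => p ∈ F i)) :
    Fintype.card (Finset (Fin g) → Fin (u + 1)) = (u + 1) ^ (2 ^ g) ∧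
    ((∃ X : Finset ι, (∑ p ∈ X, c p ≤ B) ∧
        (∀ i : Fin g, ∑ p ∈ X.filter (· ∈ F i), c p ≤ b i) ∧
        u ≤ ∑ p ∈ X, a p) ↔
      (∃ z : Finset (Fin g) → Fin (u + 1), ∃ Y : Finset (Fin g) → Finset ι,
        (∀ R : Finset (Fin g), (∀ p ∈ Y R, typeOf p = R) ∧
          ((z R : ℕ) ≤ ∑ p ∈ Y R, a p) ∧
          (∀ W : Finset ι, (∀ p ∈ W, typeOf p = R) → (z R : ℕ) ≤ ∑ p ∈ W, a p →
            ∑ p ∈ Y R, c p ≤ ∑ p ∈ W, c p)) ∧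
        (u ≤ ∑ R : Finset (Fin g), (z R : ℕ)) ∧
        (∑ p ∈ Finset.univ.biUnion Y, c p ≤ B) ∧
        (∀ i : Fin g, ∑ p ∈ (Finset.univ.biUnion Y).filter (· ∈ F i), c p ≤ b i))) := by
  classical
  have hmemF : ∀ (p : ι) (i : Fin g), p ∈ F i ↔ i ∈ typeOf p := by
    intro p i; rw [htype p]; simp
  have hfil : ∀ (W : Finset ι) (R : Finset (Fin g)) (i : Fin g),
      (∀ p ∈ W, typeOf p = R) → W.filter (· ∈ F i) = if i ∈ R then W else ∅ := by
    intro W R i hW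
    split_ifs with h
    · refine Finset.filter_true_of_mem fun p hp => ?_
      rw [hmemF, hW p hp]; exact h
    · refine Finset.filter_false_of_mem fun p hp hpF => ?_
      rw [hmemF, hW p hp] at hpF; exact h hpF
  refine ⟨by simp [Fintype.card_fun, Fintype.card_finset], ?_, ?_⟩
  · rintro ⟨X, hB, hb, hu⟩
    set s : Finset (Fin g) → ℕ := fun R => ∑ p ∈ X.filter (fun p => typeOf p = R), a p with hs
    have hsum : ∑ R : Finset (Fin g), s R = ∑ p ∈ X, a p :=
      Finset.sum_fiberwise X typeOf a
    have hzsum : u ≤ ∑ R : Finset (Fin g), min u (s R) := by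
      by_cases h : ∃ R, u ≤ s R
      · obtain ⟨R, hR⟩ := h
        calc u = min u (s R) := (min_eq_left hR).symm
          _ ≤ _ := Finset.single_le_sum (f := fun R => min u (s R)) (fun _ _ => Nat.zero_le _) (Finset.mem_univ R)
      · push_neg at h
        have heq : ∀ R ∈ (Finset.univ : Finset (Finset (Fin g))), min u (s R) = s R :=
          fun R _ => min_eq_right (le_of_lt (h R))
        rw [Finset.sum_congr rfl heq, hsum]; exact hu
    have hex : ∀ R : Finset (Fin g), ∃ W : Finset ι,
        ((∀ p ∈ W, typeOf p = R) ∧ min u (s R) ≤ ∑ p ∈ W, a p) ∧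
        ∀ W' : Finset ι, (∀ p ∈ W', typeOf p = R) → min u (s R) ≤ ∑ p ∈ W', a p →
          ∑ p ∈ W, c p ≤ ∑ p ∈ W', c p := by
      intro R
      have hne : ((Finset.univ : Finset ι).powerset.filter
          (fun W : Finset ι => (∀ p ∈ W, typeOf p = R) ∧ min u (s R) ≤ ∑ p ∈ W, a p)).Nonempty := by
        refine ⟨X.filter (fun p => typeOf p = R), ?_⟩
        simp only [Finset.mem_filter, Finset.mem_powerset, Finset.subset_univ, true_and]
        exact ⟨fun p hp => hp.2, min_le_right _ _⟩
      obtain ⟨W, hW, hmin⟩ := Finset.exists_min_image _ (fun W => ∑ p ∈ W, c p) hne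
      simp only [Finset.mem_filter, Finset.mem_powerset] at hW hmin
      exact ⟨W, hW.2, fun W' h1 h2 => hmin W' ⟨Finset.subset_univ _, h1, h2⟩⟩
    choose Y hYprop hYmin using hex
    have hY1 : ∀ R, ∀ p ∈ Y R, typeOf p = R := fun R => (hYprop R).1
    have hXR : ∀ R : Finset (Fin g), ∀ p ∈ X.filter (fun p => typeOf p = R), typeOf p = R :=
      fun R p hp => (Finset.mem_filter.mp hp).2
    have hYleX : ∀ R : Finset (Fin g),
        ∑ p ∈ Y R, c p ≤ ∑ p ∈ X.filter (fun p => typeOf p = R), c p :=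
      fun R => hYmin R _ (hXR R) (min_le_right _ _)
    refine ⟨fun R => ⟨min u (s R), Nat.lt_succ_of_le (min_le_left _ _)⟩, Y, ?_, hzsum, ?_, ?_⟩
    · exact fun R => ⟨hY1 R, (hYprop R).2, fun W h1 h2 => hYmin R W h1 h2⟩
    · rw [aux_sum_biUnion typeOf Y hY1]
      calc ∑ R : Finset (Fin g), ∑ p ∈ Y R, c p
          ≤ ∑ R : Finset (Fin g), ∑ p ∈ X.filter (fun p => typeOf p = R), c p :=
            Finset.sum_le_sum fun R _ => hYleX R
        _ = ∑ p ∈ X, c p := Finset.sum_fiberwise X typeOf c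
        _ ≤ B := hB
    · intro i
      rw [Finset.filter_biUnion, aux_sum_biUnion typeOf _
        (fun R p hp => hY1 R p (Finset.mem_of_mem_filter p hp))]
      calc ∑ R : Finset (Fin g), ∑ p ∈ (Y R).filter (· ∈ F i), c p
          ≤ ∑ R : Finset (Fin g),
              ∑ p ∈ (X.filter (fun p => typeOf p = R)).filter (· ∈ F i), c p := by
            refine Finset.sum_le_sum fun R _ => ?_
            rw [hfil (Y R) R i (hY1 R), hfil _ R i (hXR R)]
            split_ifs
            · exact hYleX R
            · simp
        _ = ∑ p ∈ X.filter (· ∈ F i), c p := by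
            have : ∀ R : Finset (Fin g),
                (X.filter (fun p => typeOf p = R)).filter (· ∈ F i)
                  = (X.filter (· ∈ F i)).filter (fun p => typeOf p = R) :=
              fun R => Finset.filter_comm _ _ _
            rw [Finset.sum_congr rfl fun R _ => by rw [this R]]
            exact Finset.sum_fiberwise _ typeOf c
        _ ≤ b i := hb i
  · rintro ⟨z, Y, hY, hz, hB, hb⟩
    have hY1 : ∀ R, ∀ p ∈ Y R, typeOf p = R := fun R => (hY R).1
    refine ⟨Finset.univ.biUnion Y, hB, hb, ?_⟩
    rw [aux_sum_biUnion typeOf Y hY1]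
    calc u ≤ ∑ R : Finset (Fin g), (z R : ℕ) := hz
      _ ≤ ∑ R : Finset (Fin g), ∑ p ∈ Y R, a p :=
          Finset.sum_le_sum fun R _ => (hY R).2.1
end
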